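/- arXiv:2012.07402 — 2 statements merged into one kernel-verified Lean document; each statement's English description precedes it below -/
import Mathlib

section
/- Let N be an abelian group, regarded as a discrete topological group. The canonical homomorphism (C(X,ℤ)/ℤ) ⊗_ℤ N → C(X,N)/N, induced by sending f ⊗ a to the class of the continuous function x ↦ f(x)·a, is an isomorphism of abelian groups, where in both quotients ℤ and N are embedded as the constant functions. (This is the statement that the natural map v(ℤ) ⊗_ℤ N → v(N) is an isomorphism for discrete N, applied to X a Grassmannian.) -/
/-!
A continuous map `g` from a compact space to a discrete group has finite image, so it is the
finite sum `∑_b 1_{g = b} • b` of fibre indicators times values; hence `f ⊗ n ↦ (x ↦ f(x) • n)`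
maps `C(X,ℤ) ⊗ N` onto `C(X,N)`. It is also injective: if `∑ fᵢ(x) • nᵢ = 0` for all `x`, then
along the finitely many fibres of `e = (fᵢ)ᵢ : X → (ι → ℤ)` we get
`∑ fᵢ ⊗ nᵢ = ∑_v 1_{e = v} ⊗ ∑ vᵢ • nᵢ = 0`. Passing to the quotients, a tensor whose image is
a constant `c` is `1 ⊗ c`, which vanishes in `(C(X,ℤ)/ℤ) ⊗ N`.
-/

open TensorProduct

instance discrete_topologicalAddGroup (B : Type*) [AddGroup B] [TopologicalSpace B]
    [DiscreteTopology B] : IsTopologicalAddGroup B where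
  continuous_add := continuous_of_discreteTopology
  continuous_neg := continuous_of_discreteTopology

instance discrete_continuousConstSMul (R B : Type*) [TopologicalSpace B] [DiscreteTopology B]
    [SMul R B] : ContinuousConstSMul R B :=
  ⟨fun _ => continuous_of_discreteTopology⟩

/-- The canonical bilinear pairing `C(X,ℤ) × B → C(X,B)`, `(f, b) ↦ (x ↦ f(x)·b)`,
for `B` a discrete abelian group. -/
noncomputable def smulPairing (X : Type*) [TopologicalSpace X]
    (B : Type*) [AddCommGroup B] [TopologicalSpace B] [DiscreteTopology B] :
    C(X, ℤ) →ₗ[ℤ] B →ₗ[ℤ] C(X, B) :=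
  LinearMap.mk₂ ℤ
    (fun f b => ⟨fun x => f x • b,
      (continuous_of_discreteTopology (f := fun k : ℤ => k • b)).comp f.continuous⟩)
    (fun f g b => ContinuousMap.ext fun x => by
      show (f x + g x) • b = f x • b + g x • b
      rw [add_smul])
    (fun c f b => ContinuousMap.ext fun x => by
      show (c * f x) • b = c • (f x • b)
      rw [mul_smul])
    (fun f b b' => ContinuousMap.ext fun x => by
      show f x • (b + b') = f x • b + f x • b'
      rw [smul_add])
    (fun c f b => ContinuousMap.ext fun x => by
      show f x • (c • b) = c • (f x • b)
      rw [smul_comm])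

/-- The submodule of constant functions in `C(X,B)`. -/
def constantMaps (X : Type*) [TopologicalSpace X]
    (B : Type*) [AddCommGroup B] [TopologicalSpace B] [ContinuousAdd B]
    [ContinuousConstSMul ℤ B] : Submodule ℤ C(X, B) where
  carrier := {f | ∃ b : B, ∀ x : X, f x = b}
  add_mem' := by
    rintro f g ⟨b, hb⟩ ⟨c, hc⟩
    exact ⟨b + c, fun x => by show f x + g x = b + c; rw [hb x, hc x]⟩
  zero_mem' := ⟨0, fun _ => rfl⟩
  smul_mem' := by
    rintro k f ⟨b, hb⟩
    exact ⟨k • b, fun x => by show k • f x = k • b; rw [hb x]⟩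

/-- The canonical homomorphism `(C(X,ℤ)/ℤ) ⊗_ℤ N → C(X,N)/N` induced by
`f ⊗ a ↦ (x ↦ f(x)·a)`, where constants are divided out on both sides. -/
noncomputable def canonQuotTensorMap (X : Type*) [TopologicalSpace X]
    (N : Type*) [AddCommGroup N] [TopologicalSpace N] [DiscreteTopology N] :
    ((C(X, ℤ) ⧸ constantMaps X ℤ) ⊗[ℤ] N) →ₗ[ℤ] (C(X, N) ⧸ constantMaps X N) :=
  TensorProduct.lift (Submodule.liftQ (constantMaps X ℤ)
    ((smulPairing X N).compr₂ (constantMaps X N).mkQ)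
    (by
      rintro f ⟨c, hc⟩
      rw [LinearMap.mem_ker]
      apply LinearMap.ext
      intro b
      show Submodule.Quotient.mk (smulPairing X N f b) = 0
      rw [Submodule.Quotient.mk_eq_zero]
      exact ⟨c • b, fun x => by show f x • b = c • b; rw [hc x]⟩))

section FiberIndicator

variable {X Y : Type*} [TopologicalSpace X] [TopologicalSpace Y] [DiscreteTopology Y]

theorem ContinuousMap.exists_finset_coe_eq_range [CompactSpace X] (e : C(X, Y)) :
    ∃ T : Finset Y, (T : Set Y) = Set.range e :=
  (isCompact_range e.continuous).finite_of_discrete.exists_finset_coe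

def fiberIndicator [DecidableEq Y] (e : C(X, Y)) (y : Y) : C(X, ℤ) :=
  ⟨fun x => if e x = y then 1 else 0,
    (continuous_of_discreteTopology (f := fun z : Y => if z = y then (1 : ℤ) else 0)).comp
      e.continuous⟩

theorem sum_fiberIndicator_smul [DecidableEq Y] {M : Type*} [AddCommGroup M] (e : C(X, Y))
    {T : Finset Y} (hT : ∀ x, e x ∈ T) (m : Y → M) (x : X) :
    ∑ y ∈ T, fiberIndicator e y x • m y = m (e x) := by
  simp [fiberIndicator, ite_smul, Finset.sum_ite_eq, hT x]

end FiberIndicator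

theorem sum_tmul_eq_zero_of_forall_sum_smul_eq_zero {X : Type*} [TopologicalSpace X]
    [CompactSpace X] {N : Type*} [AddCommGroup N] {ι : Type*} [Fintype ι]
    (f : ι → C(X, ℤ)) (n : ι → N) (h : ∀ x, ∑ i, f i x • n i = 0) :
    ∑ i, f i ⊗ₜ[ℤ] n i = 0 := by
  classical
  let e : C(X, ι → ℤ) := ⟨fun x i => f i x, continuous_pi fun i => (f i).continuous⟩
  obtain ⟨T, hT⟩ := e.exists_finset_coe_eq_range
  have he : ∀ x, e x ∈ T := fun x => by rw [← Finset.mem_coe, hT]; exact ⟨x, rfl⟩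
  have hf : ∀ i, f i = ∑ v ∈ T, v i • fiberIndicator e v := fun i => by
    ext x
    simp only [ContinuousMap.coe_sum, ContinuousMap.coe_smul, Finset.sum_apply, Pi.smul_apply,
      smul_eq_mul, mul_comm _ (fiberIndicator e _ x)]
    exact (sum_fiberIndicator_smul e he (fun v => v i) x).symm
  have hv : ∀ v ∈ T, ∑ i, v i • n i = 0 := by
    intro v hv
    obtain ⟨x, rfl⟩ : v ∈ Set.range e := hT ▸ Finset.mem_coe.2 hv
    exact h x
  calc ∑ i, f i ⊗ₜ[ℤ] n i
      = ∑ v ∈ T, fiberIndicator e v ⊗ₜ[ℤ] ∑ i, v i • n i := by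
        simp only [hf, sum_tmul, tmul_sum, smul_tmul]
        exact Finset.sum_comm
    _ = 0 := Finset.sum_eq_zero fun v hv' => by rw [hv v hv', tmul_zero]

section SmulPairing

variable {X : Type*} [TopologicalSpace X]
  {N : Type*} [AddCommGroup N] [TopologicalSpace N] [DiscreteTopology N]

@[simp]
theorem smulPairing_apply (f : C(X, ℤ)) (n : N) (x : X) : smulPairing X N f n x = f x • n :=
  rfl

variable [CompactSpace X]

theorem lift_smulPairing_injective : Function.Injective (lift (smulPairing X N)) := by
  refine (injective_iff_map_eq_zero _).2 fun s hs => ?_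
  obtain ⟨S, rfl⟩ := exists_finset s
  rw [← Finset.sum_coe_sort]
  refine sum_tmul_eq_zero_of_forall_sum_smul_eq_zero _ _ fun x => ?_
  have hx := DFunLike.congr_fun hs x
  simp only [map_sum, lift.tmul, ContinuousMap.coe_sum, Finset.sum_apply, smulPairing_apply,
    ContinuousMap.zero_apply] at hx
  exact (Finset.sum_coe_sort S _).trans hx

theorem lift_smulPairing_surjective : Function.Surjective (lift (smulPairing X N)) := by
  classical
  intro g
  obtain ⟨T, hT⟩ := g.exists_finset_coe_eq_range
  have hg : ∀ x, g x ∈ T := fun x => by rw [← Finset.mem_coe, hT]; exact ⟨x, rfl⟩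
  refine ⟨∑ b ∈ T, fiberIndicator g b ⊗ₜ[ℤ] b, ContinuousMap.ext fun x => ?_⟩
  simpa using sum_fiberIndicator_smul g hg id x

omit [CompactSpace X] in
theorem canonQuotTensorMap_comp_rTensor_mkQ :
    canonQuotTensorMap X N ∘ₗ (constantMaps X ℤ).mkQ.rTensor N =
      (constantMaps X N).mkQ ∘ₗ lift (smulPairing X N) :=
  TensorProduct.ext' fun _ _ => rfl

theorem canonQuotTensorMap_surjective : Function.Surjective (canonQuotTensorMap X N) := by
  have h := congrArg DFunLike.coe (canonQuotTensorMap_comp_rTensor_mkQ (X := X) (N := N))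
  simp only [LinearMap.coe_comp] at h
  exact Function.Surjective.of_comp (h ▸
    (Submodule.mkQ_surjective _).comp lift_smulPairing_surjective)

theorem canonQuotTensorMap_injective : Function.Injective (canonQuotTensorMap X N) := by
  refine (injective_iff_map_eq_zero _).2 fun t ht => ?_
  obtain ⟨s, rfl⟩ :=
    LinearMap.rTensor_surjective N (Submodule.mkQ_surjective (constantMaps X ℤ)) t
  obtain ⟨c, hc⟩ : lift (smulPairing X N) s ∈ constantMaps X N := by
    rw [← Submodule.Quotient.mk_eq_zero, ← Submodule.mkQ_apply, ← LinearMap.comp_apply,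
      ← canonQuotTensorMap_comp_rTensor_mkQ]
    exact ht
  have hs : s = ContinuousMap.const X 1 ⊗ₜ c :=
    lift_smulPairing_injective (ContinuousMap.ext fun x => by simp [hc x])
  have h1 : (constantMaps X ℤ).mkQ (ContinuousMap.const X 1) = 0 :=
    (Submodule.Quotient.mk_eq_zero _).2 ⟨1, fun _ => rfl⟩
  rw [hs, LinearMap.rTensor_tmul, h1, zero_tmul]

end SmulPairing

theorem canonQuotTensorMap_bijective_general
    (X : Type*) [TopologicalSpace X] [CompactSpace X]
    (N : Type*) [AddCommGroup N] [TopologicalSpace N] [DiscreteTopology N] :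
    Function.Bijective (canonQuotTensorMap X N) :=
  ⟨canonQuotTensorMap_injective, canonQuotTensorMap_surjective⟩

/-- For `X` a compact Hausdorff totally disconnected space and `N` an
abelian group with the discrete topology, the canonical homomorphism
`(C(X,ℤ)/ℤ) ⊗_ℤ N → C(X,N)/N` is an isomorphism of abelian groups: the natural map
`v(ℤ) ⊗_ℤ N → v(N)` is an isomorphism for discrete `N`. -/
theorem canonQuotTensorMap_bijective
    (X : Type*) [TopologicalSpace X] [CompactSpace X] [T2Space X]
    [TotallyDisconnectedSpace X]
    (N : Type*) [AddCommGroup N] [TopologicalSpace N] [DiscreteTopology N] :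
    Function.Bijective (canonQuotTensorMap X N) :=
  canonQuotTensorMap_bijective_general X N
end

section
/- Let N be a topological abelian group and (U_i)_{i∈ℕ} a decreasing sequence of open subgroups of N which forms a neighbourhood basis of 0 and such that the canonical map N → lim_i N/U_i into the inverse limit is bijective (i.e., N is prodiscrete). Then the canonical map C(X,N) → lim_i C(X, N/U_i), sending a continuous function f to the compatible system of its reductions modulo U_i, is an isomorphism of abelian groups, where each quotient N/U_i carries the discrete topology and the inverse limit is taken along the natural projection maps. -/
/-- The transition homomorphism `N/U_j → N/U_i` for `i ≤ j` (when `U_j ≤ U_i`). -/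
def transQ (N : Type*) [AddCommGroup N] (U : ℕ → AddSubgroup N)
    (hdec : ∀ i j : ℕ, i ≤ j → U j ≤ U i) (i j : ℕ) (hij : i ≤ j) :
    N ⧸ U j →+ N ⧸ U i :=
  QuotientAddGroup.map (U j) (U i) (AddMonoidHom.id N) (fun x hx => hdec i j hij hx)

/-- The inverse limit `lim_i N/U_i`, realized as the subgroup of compatible systems in
`Π i, N/U_i`. -/
def invLimQuot (N : Type*) [AddCommGroup N] (U : ℕ → AddSubgroup N)
    (hdec : ∀ i j : ℕ, i ≤ j → U j ≤ U i) :
    AddSubgroup ((i : ℕ) → N ⧸ U i) where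
  carrier := {t | ∀ (i j : ℕ) (hij : i ≤ j), transQ N U hdec i j hij (t j) = t i}
  add_mem' := by
    intro a b ha hb i j hij
    show transQ N U hdec i j hij (a j + b j) = a i + b i
    rw [map_add, ha i j hij, hb i j hij]
  zero_mem' := by
    intro i j hij
    show transQ N U hdec i j hij 0 = 0
    rw [map_zero]
  neg_mem' := by
    intro a ha i j hij
    show transQ N U hdec i j hij (-(a j)) = -(a i)
    rw [map_neg, ha i j hij]

/-- The canonical homomorphism `N → lim_i N/U_i`. -/
def canonToLim (N : Type*) [AddCommGroup N] (U : ℕ → AddSubgroup N)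
    (hdec : ∀ i j : ℕ, i ≤ j → U j ≤ U i) :
    N →+ ↥(invLimQuot N U hdec) where
  toFun := fun a => ⟨fun i => QuotientAddGroup.mk a, fun i j hij => rfl⟩
  map_zero' := rfl
  map_add' := fun a b => by
    apply Subtype.ext
    funext i
    show (QuotientAddGroup.mk (a + b) : N ⧸ U i) = QuotientAddGroup.mk a + QuotientAddGroup.mk b
    rfl

/-- The inverse limit `lim_i C(X, N/U_i)` of compatible systems of continuous maps. -/
def invLimMaps (X : Type*) [TopologicalSpace X]
    (N : Type*) [AddCommGroup N] [TopologicalSpace N] [IsTopologicalAddGroup N]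
    (U : ℕ → AddSubgroup N) (hdec : ∀ i j : ℕ, i ≤ j → U j ≤ U i) :
    AddSubgroup ((i : ℕ) → C(X, N ⧸ U i)) where
  carrier := {t | ∀ (i j : ℕ) (hij : i ≤ j) (x : X),
    transQ N U hdec i j hij (t j x) = t i x}
  add_mem' := by
    intro a b ha hb i j hij x
    show transQ N U hdec i j hij (a j x + b j x) = a i x + b i x
    rw [map_add, ha i j hij x, hb i j hij x]
  zero_mem' := by
    intro i j hij x
    show transQ N U hdec i j hij 0 = 0
    rw [map_zero]
  neg_mem' := by
    intro a ha i j hij x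
    show transQ N U hdec i j hij (-(a j x)) = -(a i x)
    rw [map_neg, ha i j hij x]

/-- The canonical homomorphism `C(X,N) → lim_i C(X, N/U_i)` sending a continuous function
to the compatible system of its reductions modulo the `U_i`. -/
def canonMapsToLim (X : Type*) [TopologicalSpace X]
    (N : Type*) [AddCommGroup N] [TopologicalSpace N] [IsTopologicalAddGroup N]
    (U : ℕ → AddSubgroup N) (hdec : ∀ i j : ℕ, i ≤ j → U j ≤ U i) :
    C(X, N) →+ ↥(invLimMaps X N U hdec) where
  toFun := fun f =>
    ⟨fun i => ContinuousMap.comp ⟨QuotientAddGroup.mk, continuous_quotient_mk'⟩ f,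
      fun i j hij x => rfl⟩
  map_zero' := by
    apply Subtype.ext
    funext i
    apply ContinuousMap.ext
    intro x
    rfl
  map_add' := fun f g => by
    apply Subtype.ext
    funext i
    apply ContinuousMap.ext
    intro x
    show (QuotientAddGroup.mk (f x + g x) : N ⧸ U i)
      = QuotientAddGroup.mk (f x) + QuotientAddGroup.mk (g x)
    rfl

/-!
Evaluation at a point `x` of `X` carries `lim_i C(X, N/U_i)` to `lim_i N/U_i`, so bijectivity of
`N → lim_i N/U_i` gives injectivity and a unique pointwise preimage `f : X → N` of any compatible
system `(t_i)`. This `f` is continuous: its reduction modulo `U_i` is the continuous map `t_i`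
into the discrete group `N/U_i`, hence locally constant, and the fibres of these reductions
through `f x` form a neighbourhood basis of `f x`.
-/

theorem AddSubgroup.hasBasis_nhds_zero {N ι : Type*} [AddCommGroup N] [TopologicalSpace N]
    {U : ι → AddSubgroup N} (hopen : ∀ i, IsOpen (U i : Set N))
    (hbasis : ∀ s ∈ nhds (0 : N), ∃ i, (U i : Set N) ⊆ s) :
    (nhds (0 : N)).HasBasis (fun _ => True) (fun i => (U i : Set N)) :=
  ⟨fun s => ⟨fun hs => (hbasis s hs).imp fun _ hi => ⟨trivial, hi⟩,
    fun ⟨i, _, hi⟩ => Filter.mem_of_superset ((hopen i).mem_nhds (U i).zero_mem) hi⟩⟩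

theorem continuous_of_forall_continuous_mk_comp {X N ι : Type*} [TopologicalSpace X]
    [AddCommGroup N] [TopologicalSpace N] [IsTopologicalAddGroup N] {U : ι → AddSubgroup N}
    (hopen : ∀ i, IsOpen (U i : Set N)) (hbasis : ∀ s ∈ nhds (0 : N), ∃ i, (U i : Set N) ⊆ s)
    {f : X → N} (hf : ∀ i, Continuous fun x => (f x : N ⧸ U i)) : Continuous f := by
  refine continuous_iff_continuousAt.2 fun x₀ => ?_
  refine ((AddSubgroup.hasBasis_nhds_zero hopen hbasis).nhds_of_zero
    (f x₀)).tendsto_right_iff.2 fun i _ => ?_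
  have := QuotientAddGroup.discreteTopology (hopen i)
  have hfibre : {(f x₀ : N ⧸ U i)} ∈ nhds (f x₀ : N ⧸ U i) := (isOpen_discrete _).mem_nhds rfl
  filter_upwards [(hf i).continuousAt.eventually_mem hfibre] with x hx
  exact QuotientAddGroup.eq_iff_sub_mem.1 hx

section Prodiscrete

variable {X N : Type*} [TopologicalSpace X] [AddCommGroup N] [TopologicalSpace N]
  [IsTopologicalAddGroup N] {U : ℕ → AddSubgroup N} {hdec : ∀ i j : ℕ, i ≤ j → U j ≤ U i}

def invLimMaps.eval (x : X) (t : invLimMaps X N U hdec) : invLimQuot N U hdec :=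
  ⟨fun i => t.1 i x, fun i j hij => t.2 i j hij x⟩

theorem invLimMaps.eval_canonMapsToLim (x : X) (f : C(X, N)) :
    invLimMaps.eval x (canonMapsToLim X N U hdec f) = canonToLim N U hdec (f x) :=
  rfl

end Prodiscrete

theorem canonMapsToLim_bijective_general
    (X : Type*) [TopologicalSpace X]
    (N : Type*) [AddCommGroup N] [TopologicalSpace N] [IsTopologicalAddGroup N]
    (U : ℕ → AddSubgroup N)
    (hdec : ∀ i j : ℕ, i ≤ j → U j ≤ U i)
    (hopen : ∀ i, IsOpen (U i : Set N))
    (hbasis : ∀ s ∈ nhds (0 : N), ∃ i, (U i : Set N) ⊆ s)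
    (hcomplete : Function.Bijective (canonToLim N U hdec)) :
    Function.Bijective (canonMapsToLim X N U hdec) := by
  refine ⟨fun f g hfg => ContinuousMap.ext fun x => hcomplete.1 ?_, fun t => ?_⟩
  · rw [← invLimMaps.eval_canonMapsToLim, ← invLimMaps.eval_canonMapsToLim, hfg]
  · choose f hf using fun x => hcomplete.2 (invLimMaps.eval x t)
    have hmk (i : ℕ) (x : X) : (f x : N ⧸ U i) = t.1 i x :=
      congrFun (congrArg Subtype.val (hf x)) i
    have hcont : Continuous f := continuous_of_forall_continuous_mk_comp hopen hbasis fun i => by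
      simpa only [hmk] using (t.1 i).continuous
    exact ⟨⟨f, hcont⟩, Subtype.ext <| funext fun i => ContinuousMap.ext (hmk i)⟩

/-- Let `N` be a prodiscrete abelian topological group: the `U i` form a
decreasing sequence of open subgroups which is a neighbourhood basis of `0`, and the
canonical map `N → lim_i N/U_i` is bijective. Then for `X` a compact Hausdorff totally
disconnected space, the canonical map `C(X,N) → lim_i C(X, N/U_i)` is an isomorphism of
abelian groups. -/
theorem canonMapsToLim_bijective
    (X : Type*) [TopologicalSpace X] [CompactSpace X] [T2Space X]
    [TotallyDisconnectedSpace X]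
    (N : Type*) [AddCommGroup N] [TopologicalSpace N] [IsTopologicalAddGroup N]
    (U : ℕ → AddSubgroup N)
    (hdec : ∀ i j : ℕ, i ≤ j → U j ≤ U i)
    (hopen : ∀ i, IsOpen (U i : Set N))
    (hbasis : ∀ s ∈ nhds (0 : N), ∃ i, (U i : Set N) ⊆ s)
    (hcomplete : Function.Bijective (canonToLim N U hdec)) :
    Function.Bijective (canonMapsToLim X N U hdec) :=
  canonMapsToLim_bijective_general X N U hdec hopen hbasis hcomplete
end
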